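/- arXiv:2408.06483 — 3 statements merged into one kernel-verified Lean document; each statement's English description precedes it below -/
import Mathlib

section
/- For every real α > 1 and every natural number n ≥ 2, Σ_{i=2}^{n} Γ(i−1)/Γ(i + 1/(α−1)) = ((−αn + n − 1)·Γ(n)) / Γ((nα + α − n)/(α−1)) + α / Γ((2α−1)/(α−1)), where Γ is the Gamma function. -/
/-!
With `c = 1/(α-1)` and `g x = Γ(x)/Γ(x+c)`, the functional equation `Γ(s+1) = s Γ(s)` gives
`g x - g (x+1) = c · Γ(x)/Γ(x+c+1)`, so the sum telescopes to `(g 1 - g n)/c`. The right-hand side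
is the same quantity, rewritten with `n + c + 1 = (nα + α - n)/(α-1)` and `2 + c = (2α-1)/(α-1)`.
-/

open Real Finset

theorem Gamma_div_Gamma_add_sub_succ {x c : ℝ} (hx : x ≠ 0) (hxc : 0 < x + c) :
    Gamma x / Gamma (x + c) - Gamma (x + 1) / Gamma (x + 1 + c) =
      c * (Gamma x / Gamma (x + c + 1)) := by
  have hΓ : Gamma (x + c) ≠ 0 := (Gamma_pos_of_pos hxc).ne'
  rw [add_right_comm x 1 c, Gamma_add_one hx, Gamma_add_one hxc.ne']
  field_simp
  ring

theorem mul_sum_Icc_Gamma_sub_one_div_Gamma_add {c : ℝ} (hc : -1 < c) {n : ℕ} (hn : 1 ≤ n) :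
    c * ∑ i ∈ Icc 2 n, Gamma ((i : ℝ) - 1) / Gamma ((i : ℝ) + c) =
      1 / Gamma (1 + c) - Gamma n / Gamma (n + c) := by
  set g : ℕ → ℝ := fun i => Gamma ((i : ℝ) - 1) / Gamma ((i : ℝ) - 1 + c)
  have hstep : ∀ i ∈ Ico 2 (n + 1),
      c * (Gamma ((i : ℝ) - 1) / Gamma ((i : ℝ) + c)) = -(g (i + 1) - g i) := by
    intro i hi
    have hi : (2 : ℝ) ≤ i := by exact_mod_cast (mem_Ico.mp hi).1
    have := Gamma_div_Gamma_add_sub_succ (x := (i : ℝ) - 1) (c := c) (by linarith) (by linarith)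
    simp only [g, Nat.cast_add_one, add_sub_cancel_right]
    rw [show (i : ℝ) - 1 + c + 1 = i + c by ring, sub_add_cancel] at this
    linarith
  rw [mul_sum, ← Ico_add_one_right_eq_Icc, sum_congr rfl hstep, sum_neg_distrib,
    sum_Ico_sub g (by omega)]
  norm_num [g]

/-- For real α > 1 and natural n ≥ 2,
Σ_{i=2}^n Γ(i−1)/Γ(i + 1/(α−1)) = ((−αn + n − 1)·Γ(n))/Γ((nα + α − n)/(α−1)) + α/Γ((2α−1)/(α−1)). -/
theorem stmt3 (α : ℝ) (n : ℕ) (hα : 1 < α) (hn : 2 ≤ n) :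
    ∑ i ∈ Finset.Icc 2 n, Real.Gamma ((i : ℝ) - 1) / Real.Gamma ((i : ℝ) + 1 / (α - 1)) =
      (-α * n + n - 1) * Real.Gamma n / Real.Gamma ((n * α + α - n) / (α - 1)) +
        α / Real.Gamma ((2 * α - 1) / (α - 1)) := by
  have hα1 : 0 < α - 1 := by linarith
  generalize hc : 1 / (α - 1) = c
  have hc_pos : 0 < c := hc ▸ by positivity
  have hα : α = 1 + 1 / c := by rw [← hc]; field_simp; ring
  subst hα
  have hnc : (0 : ℝ) < n + c := by positivity
  have h1c : (0 : ℝ) < 1 + c := by positivity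
  have htelescope := mul_sum_Icc_Gamma_sub_one_div_Gamma_add (by linarith : -1 < c) (by omega : 1 ≤ n)
  have hn_arg : (n * (1 + 1 / c) + (1 + 1 / c) - n) / (1 + 1 / c - 1) = n + c + 1 := by
    field_simp; ring
  have h2_arg : (2 * (1 + 1 / c) - 1) / (1 + 1 / c - 1) = 1 + c + 1 := by
    field_simp; ring
  rw [hn_arg, h2_arg, Gamma_add_one hnc.ne', Gamma_add_one h1c.ne',
    ← mul_div_cancel_left₀ (∑ i ∈ Icc 2 n, _) hc_pos.ne', htelescope]
  have hGn : Gamma (n + c) ≠ 0 := (Gamma_pos_of_pos hnc).ne'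
  have hG1 : Gamma (1 + c) ≠ 0 := (Gamma_pos_of_pos h1c).ne'
  field_simp
  ring
end

section
/- For every real α > 1 and every natural number n ≥ 2, Σ_{i=2}^{n} [Γ(i−1)·Γ(n + 1 + 1/(α−1))] / [Γ(i + 1/(α−1))·Γ(n)] = −αn + (α·Γ((nα + α − n)/(α−1))) / (Γ((2α−1)/(α−1))·Γ(n)) + n − 1. -/
/-!
With `c = 1 / (α - 1)`, the functional equation `Γ(x + 1) = x Γ(x)` makes the summand
`Γ(i - 1) / Γ(i + c)` a telescoping difference:
`c Γ(x) / Γ(x + 1 + c) = Γ(x) / Γ(x + c) - Γ(x + 1) / Γ(x + 1 + c)`.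
Summing gives `(1 / Γ(1 + c) - Γ(n) / Γ(n + c)) / c`, and the closed form follows from
`Γ(n + 1 + c) = (n + c) Γ(n + c)`, `Γ(2 + c) = (1 + c) Γ(1 + c)` and `α = (1 + c) / c`.
-/

open Real Finset

lemma Gamma_add_one_add (x c : ℝ) (h : x + c ≠ 0) :
    Gamma (x + 1 + c) = (x + c) * Gamma (x + c) := by
  rw [add_right_comm, Gamma_add_one h]

lemma Gamma_div_Gamma_add_sub_Gamma_div_Gamma_add {x : ℝ} (c : ℝ) (hx : x ≠ 0)
    (hxc : Gamma (x + c) ≠ 0) :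
    Gamma x / Gamma (x + c) - Gamma (x + 1) / Gamma (x + 1 + c) =
      c * Gamma x / Gamma (x + 1 + c) := by
  have hxc' : x + c ≠ 0 := fun h => hxc (by rw [h, Gamma_zero])
  rw [Gamma_add_one hx, Gamma_add_one_add x c hxc']
  field_simp
  ring

lemma sum_Icc_Gamma_sub_one_div_Gamma_add {c : ℝ} (hc : 0 < c) {n : ℕ} (hn : 1 ≤ n) :
    ∑ i ∈ Icc 2 n, Gamma ((i : ℝ) - 1) / Gamma ((i : ℝ) + c) =
      (1 / Gamma (1 + c) - Gamma n / Gamma ((n : ℝ) + c)) / c := by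
  induction n, hn using Nat.le_induction with
  | base => simp [Gamma_one]
  | succ m hm ih =>
    have hm0 : (0 : ℝ) < m := by exact_mod_cast hm
    have telescope := Gamma_div_Gamma_add_sub_Gamma_div_Gamma_add c hm0.ne'
      (Gamma_pos_of_pos (by linarith)).ne'
    rw [sum_Icc_succ_top (by omega), ih]
    push_cast
    rw [add_sub_cancel_right, eq_div_iff hc.ne', add_mul, div_mul_cancel₀ _ hc.ne']
    linear_combination -telescope

/-- For real α > 1 and natural n ≥ 2,
Σ_{i=2}^n Γ(i−1)Γ(n+1+1/(α−1))/(Γ(i+1/(α−1))Γ(n)) =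
  −αn + αΓ((nα+α−n)/(α−1))/(Γ((2α−1)/(α−1))Γ(n)) + n − 1. -/
theorem stmt4 (α : ℝ) (n : ℕ) (hα : 1 < α) (hn : 2 ≤ n) :
    ∑ i ∈ Finset.Icc 2 n,
        Real.Gamma ((i : ℝ) - 1) * Real.Gamma ((n : ℝ) + 1 + 1 / (α - 1)) /
          (Real.Gamma ((i : ℝ) + 1 / (α - 1)) * Real.Gamma n) =
      -α * n + α * Real.Gamma ((n * α + α - n) / (α - 1)) /
          (Real.Gamma ((2 * α - 1) / (α - 1)) * Real.Gamma n) + n - 1 := by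
  have hα1 : α - 1 ≠ 0 := by linarith
  set c : ℝ := 1 / (α - 1) with hc_def
  have hc : 0 < c := one_div_pos.mpr (by linarith)
  have hαc : α = (1 + c) / c := by rw [hc_def]; field_simp; ring
  have hnum : ((n : ℝ) * α + α - n) / (α - 1) = (n : ℝ) + 1 + c := by
    rw [hc_def]; field_simp; ring
  have hden : (2 * α - 1) / (α - 1) = 1 + 1 + c := by rw [hc_def]; field_simp; ring
  have hn0 : (0 : ℝ) < n := by positivity
  have hΓn := (Gamma_pos_of_pos hn0).ne'
  have hΓnc := (Gamma_pos_of_pos (show (0 : ℝ) < n + c by linarith)).ne'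
  have hΓc := (Gamma_pos_of_pos (show (0 : ℝ) < 1 + c by linarith)).ne'
  have hsum : ∑ i ∈ Icc 2 n, Gamma ((i : ℝ) - 1) * Gamma ((n : ℝ) + 1 + c) /
        (Gamma ((i : ℝ) + c) * Gamma n) =
      Gamma ((n : ℝ) + 1 + c) / Gamma n *
        ∑ i ∈ Icc 2 n, Gamma ((i : ℝ) - 1) / Gamma ((i : ℝ) + c) := by
    rw [mul_sum]
    exact sum_congr rfl fun i _ => by ring
  rw [hsum, sum_Icc_Gamma_sub_one_div_Gamma_add hc (by omega), hnum, hden,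
    Gamma_add_one_add _ _ (by positivity), Gamma_add_one_add _ _ (by positivity), hαc]
  field_simp
  ring
end

section
/- Fix α > 1, R > 0 and n ≥ 2. Then 2R/n + Σ_{k=2}^{n} (2R/n)·Π_{j=k}^{n} ((α−1)j+1)/((α−1)(j−1)) = (2R/n)·(−αn + α·Γ((nα+α−n)/(α−1))/(Γ((2α−1)/(α−1))·(n−1)!) + n). -/
lemma stmt15_aux (α : ℝ) (hα : 1 < α) : ∀ n : ℕ, 2 ≤ n →
    ∑ k ∈ Finset.Icc 2 n, ∏ j ∈ Finset.Icc k n, ((α - 1) * j + 1) / ((α - 1) * ((j : ℝ) - 1)) =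
      -α * n + α * Real.Gamma ((n * α + α - n) / (α - 1)) /
        (Real.Gamma ((2 * α - 1) / (α - 1)) * (Nat.factorial (n - 1) : ℝ)) + n - 1 := by
  have hα1 : α - 1 ≠ 0 := sub_ne_zero.mpr hα.ne'
  have hα1' : (0:ℝ) < α - 1 := by linarith
  have hD : 0 < Real.Gamma ((2 * α - 1) / (α - 1)) :=
    Real.Gamma_pos_of_pos (div_pos (by linarith) hα1')
  intro n hn
  induction n, hn using Nat.le_induction with
  | base =>
      rw [Finset.Icc_self, Finset.sum_singleton, Finset.Icc_self, Finset.prod_singleton]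
      have harg : ((2:ℕ) * α + α - (2:ℕ)) / (α - 1) = (2 * α - 1) / (α - 1) + 1 := by
        push_cast; field_simp; ring
      rw [harg, Real.Gamma_add_one (div_pos (by linarith) hα1').ne']
      simp only [Nat.factorial]
      push_cast
      generalize Real.Gamma ((2 * α - 1) / (α - 1)) = G at hD ⊢
      field_simp [hD.ne']
      ring
  | succ n hn ih =>
      rw [Finset.sum_Icc_succ_top (by omega : 2 ≤ n + 1), Finset.Icc_self,
        Finset.prod_singleton]
      have hstep : ∀ k ∈ Finset.Icc 2 n,
          (∏ j ∈ Finset.Icc k (n+1), ((α - 1) * j + 1) / ((α - 1) * ((j : ℝ) - 1))) =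
          (∏ j ∈ Finset.Icc k n, ((α - 1) * j + 1) / ((α - 1) * ((j : ℝ) - 1))) *
            (((α - 1) * (n+1) + 1) / ((α - 1) * (((n:ℝ)+1) - 1))) := by
        intro k hk
        have hk' := (Finset.mem_Icc.mp hk).2
        rw [Finset.prod_Icc_succ_top (by omega : k ≤ n + 1)]
        push_cast; ring_nf
      rw [Finset.sum_congr rfl hstep, ← Finset.sum_mul, ih]
      have hn0 : (n:ℝ) ≠ 0 := by positivity
      have harg : ((n+1:ℕ) * α + α - (n+1:ℕ)) / (α - 1) = (n * α + α - n) / (α - 1) + 1 := by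
        push_cast; field_simp; ring
      have hX : (0:ℝ) < (n * α + α - n) / (α - 1) := by
        apply div_pos _ hα1'
        nlinarith [hα1', (by exact_mod_cast Nat.zero_le n : (0:ℝ) ≤ n)]
      rw [harg, Real.Gamma_add_one hX.ne']
      have hfac : ((n + 1 - 1).factorial : ℝ) = n * ((n-1).factorial : ℝ) := by
        have : n - 1 + 1 = n := by omega
        rw [Nat.add_sub_cancel, ← this, Nat.factorial_succ]
        push_cast [this]; ring
      rw [hfac]
      have hF : ((n-1).factorial : ℝ) ≠ 0 := by positivity
      push_cast
      field_simp [hD.ne', hn0, hF]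
      ring

/-- For α > 1, R > 0 and n ≥ 2,
2R/n + Σ_{k=2}^n (2R/n)·Π_{j=k}^n ((α−1)j+1)/((α−1)(j−1)) =
  (2R/n)·(−αn + α·Γ((nα+α−n)/(α−1))/(Γ((2α−1)/(α−1))·(n−1)!) + n). -/
theorem stmt15 (α R : ℝ) (n : ℕ) (hα : 1 < α) (hR : 0 < R) (hn : 2 ≤ n) :
    2 * R / n +
        ∑ k ∈ Finset.Icc 2 n,
          (2 * R / n) * ∏ j ∈ Finset.Icc k n, ((α - 1) * j + 1) / ((α - 1) * ((j : ℝ) - 1)) =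
      (2 * R / n) *
        (-α * n +
          α * Real.Gamma ((n * α + α - n) / (α - 1)) /
            (Real.Gamma ((2 * α - 1) / (α - 1)) * (Nat.factorial (n - 1) : ℝ)) + n) := by
  rw [← Finset.mul_sum, stmt15_aux α hα n hn]
  ring
end
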